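/- arXiv:0709.4676 — 4 statements merged into one kernel-verified Lean document; each statement's English description precedes it below -/
import Mathlib

section
/- For all natural numbers n ≥ k ≥ 1, C(n,k) ≤ n^{ω(C(n,k))}, where ω(m) is the number of distinct prime divisors of m. -/
open Finset

namespace Nat

theorem le_pow_card_primeFactors {m N : ℕ}
    (h : ∀ p ∈ m.primeFactors, p ^ m.factorization p ≤ N) :
    m ≤ N ^ m.primeFactors.card := by
  rcases eq_or_ne m 0 with rfl | hm
  · exact Nat.zero_le _
  calc m = ∏ p ∈ m.primeFactors, p ^ m.factorization p :=
        prod_primeFactors_pow_factorization hm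
    _ ≤ ∏ _p ∈ m.primeFactors, N := prod_le_prod' h
    _ = N ^ m.primeFactors.card := prod_const N

theorem pow_factorization_choose_le_of_mem_primeFactors {n k p : ℕ}
    (hp : p ∈ (n.choose k).primeFactors) : p ^ (n.choose k).factorization p ≤ n := by
  rcases n.eq_zero_or_pos with rfl | hn
  · cases k <;> simp at hp
  · exact pow_factorization_choose_le hn

end Nat

theorem stmt_4_general (n k : ℕ) :
    n.choose k ≤ n ^ (n.choose k).primeFactors.card :=
  Nat.le_pow_card_primeFactors fun _ => Nat.pow_factorization_choose_le_of_mem_primeFactors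

theorem stmt_4 (n k : ℕ) (hk : 1 ≤ k) (hkn : k ≤ n) :
    n.choose k ≤ n ^ (n.choose k).primeFactors.card :=
  stmt_4_general n k
end

section
/- For fixed natural numbers n > m ≥ 1, ω(C(nk, mk)) = log(n^n/(m^m (n−m)^{n−m})) · k/log k + o(k/log k) as k → ∞. -/
/-!
The terms `C(N, j) a ^ j b ^ (N - j)` of the expansion of `(a + b) ^ N` increase up to the index
`M = N a / (a + b)` and decrease after it. For `N = n k`, `M = m k`, `a = m`, `b = n - m` this
gives `r ^ k / (n k + 1) ≤ C(n k, m k) ≤ r ^ k` with `r = n ^ n / (m ^ m (n - m) ^ (n - m))`, so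
`log C(n k, m k) ~ k log r`.

Every prime power dividing `C(N, M)` is at most `N`, hence
`ω(C(n k, m k)) ≥ log C(n k, m k) / log (n k)`.
Conversely, at most `y` prime factors are `≤ y` and at most `log C / log y` are `> y`; the choice
`y = k / (log k) ^ 2` makes the first count negligible while `log y ~ log k`.
-/

open Filter Finset Real Asymptotics Topology

namespace Nat

theorem choose_mul_pow_le_add_pow (a b N M : ℕ) :
    N.choose M * a ^ M * b ^ (N - M) ≤ (a + b) ^ N := by
  rcases le_or_gt M N with hMN | hNM
  · calc N.choose M * a ^ M * b ^ (N - M) = a ^ M * b ^ (N - M) * N.choose M := by ring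
      _ ≤ ∑ j ∈ range (N + 1), a ^ j * b ^ (N - j) * N.choose j :=
        single_le_sum (f := fun j => a ^ j * b ^ (N - j) * N.choose j) (fun _ _ => Nat.zero_le _)
          (mem_range.2 (Nat.lt_succ_of_le hMN))
      _ = (a + b) ^ N := by simp only [add_pow, Nat.cast_id]
  · simp [choose_eq_zero_of_lt hNM]

theorem choose_succ_mul_pow_mul (a b N j : ℕ) (hj : j < N) :
    N.choose (j + 1) * a ^ (j + 1) * b ^ (N - (j + 1)) * ((j + 1) * b) =
      N.choose j * a ^ j * b ^ (N - j) * ((N - j) * a) := by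
  have hb : b ^ (N - (j + 1)) * b = b ^ (N - j) := by
    rw [← pow_succ]; congr 1; omega
  calc _ = N.choose (j + 1) * (j + 1) * a ^ (j + 1) * (b ^ (N - (j + 1)) * b) := by ring
    _ = N.choose j * (N - j) * a ^ (j + 1) * b ^ (N - j) := by rw [choose_succ_right_eq, hb]
    _ = _ := by ring

theorem choose_mul_pow_le_of_mul_eq {a b N M : ℕ} (hb : 0 < b) (h : M * (a + b) = N * a)
    (j : ℕ) : N.choose j * a ^ j * b ^ (N - j) ≤ N.choose M * a ^ M * b ^ (N - M) := by
  set t : ℕ → ℕ := fun j => N.choose j * a ^ j * b ^ (N - j)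
  have hMN : M ≤ N := by nlinarith
  have step_up : ∀ i < M, t i ≤ t (i + 1) := by
    intro i hi
    have hcmp : (i + 1) * b ≤ (N - i) * a := by
      zify [(by omega : i ≤ N)] at h ⊢; nlinarith
    refine Nat.le_of_mul_le_mul_right ?_ (by positivity : 0 < (i + 1) * b)
    rw [choose_succ_mul_pow_mul a b N i (by omega)]
    exact Nat.mul_le_mul_left _ hcmp
  have step_down : ∀ i ≥ M, t (i + 1) ≤ t i := by
    intro i hi
    rcases lt_or_ge i N with hiN | hNi
    · have hcmp : (N - i) * a ≤ (i + 1) * b := by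
        zify [hiN.le] at h ⊢; nlinarith
      refine Nat.le_of_mul_le_mul_right ?_ (by positivity : 0 < (i + 1) * b)
      rw [choose_succ_mul_pow_mul a b N i hiN]
      exact Nat.mul_le_mul_left _ hcmp
    · simp [t, choose_eq_zero_of_lt (by omega : N < i + 1)]
  rcases le_or_gt j M with hjM | hMj
  · exact Nat.decreasingInduction (motive := fun i _ => t i ≤ t M)
      (fun i hi ih => (step_up i hi).trans ih) le_rfl hjM
  · exact Nat.rel_of_forall_rel_succ_of_le_of_le (· ≥ ·) step_down le_rfl hMj.le

theorem add_pow_le_succ_mul_choose_mul_pow {a b N M : ℕ} (hb : 0 < b) (h : M * (a + b) = N * a) :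
    (a + b) ^ N ≤ (N + 1) * (N.choose M * a ^ M * b ^ (N - M)) := by
  calc (a + b) ^ N = ∑ j ∈ range (N + 1), N.choose j * a ^ j * b ^ (N - j) := by
        rw [add_pow]; exact sum_congr rfl fun j _ => by rw [Nat.cast_id]; ring
    _ ≤ ∑ _j ∈ range (N + 1), N.choose M * a ^ M * b ^ (N - M) :=
        sum_le_sum fun j _ => choose_mul_pow_le_of_mul_eq hb h j
    _ = _ := by rw [sum_const, card_range, smul_eq_mul]

end Nat

noncomputable def chooseRate (n m : ℕ) : ℝ :=
  (n : ℝ) ^ n / ((m : ℝ) ^ m * ((n : ℝ) - m) ^ (n - m))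

theorem chooseRate_eq_div {n m : ℕ} (h : m ≤ n) :
    chooseRate n m = ((n ^ n : ℕ) : ℝ) / ((m ^ m * (n - m) ^ (n - m) : ℕ) : ℝ) := by
  simp [chooseRate, Nat.cast_sub h]

theorem chooseRate_pos {n m : ℕ} (h : m ≤ n) : 0 < chooseRate n m := by
  rw [chooseRate_eq_div h]
  have := Nat.pow_self_pos (n := n)
  have := Nat.pow_self_pos (n := m)
  have := Nat.pow_self_pos (n := n - m)
  positivity

theorem choose_mul_mul_pow_eq (n m k : ℕ) :
    (n * k).choose (m * k) * m ^ (m * k) * (n - m) ^ (n * k - m * k) =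
      (n * k).choose (m * k) * (m ^ m * (n - m) ^ (n - m)) ^ k := by
  rw [← Nat.sub_mul, mul_pow, pow_mul, pow_mul, mul_assoc]

theorem choose_mul_le_chooseRate_pow {n m : ℕ} (h : m ≤ n) (k : ℕ) :
    ((n * k).choose (m * k) : ℝ) ≤ chooseRate n m ^ k := by
  have key : (n * k).choose (m * k) * (m ^ m * (n - m) ^ (n - m)) ^ k ≤ (n ^ n) ^ k := by
    have := Nat.choose_mul_pow_le_add_pow m (n - m) (n * k) (m * k)
    rwa [Nat.add_sub_cancel' h, choose_mul_mul_pow_eq, pow_mul] at this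
  have := Nat.pow_self_pos (n := m)
  have := Nat.pow_self_pos (n := n - m)
  rw [chooseRate_eq_div h, div_pow, le_div_iff₀ (by positivity)]
  exact_mod_cast key

theorem chooseRate_pow_le_succ_mul_choose_mul {n m : ℕ} (h : m < n) (k : ℕ) :
    chooseRate n m ^ k ≤ (n * k + 1) * (n * k).choose (m * k) := by
  have key : (n ^ n) ^ k ≤
      (n * k + 1) * ((n * k).choose (m * k) * (m ^ m * (n - m) ^ (n - m)) ^ k) := by
    have := Nat.add_pow_le_succ_mul_choose_mul_pow (a := m) (N := n * k) (M := m * k)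
      (Nat.sub_pos_of_lt h) (by rw [Nat.add_sub_cancel' h.le]; ring)
    rwa [Nat.add_sub_cancel' h.le, choose_mul_mul_pow_eq, pow_mul] at this
  have := Nat.pow_self_pos (n := m)
  have := Nat.pow_self_pos (n := n - m)
  rw [chooseRate_eq_div h.le, div_pow, div_le_iff₀ (by positivity), mul_assoc]
  exact_mod_cast key

theorem tendsto_log_mul_add_one_div (n : ℕ) :
    Tendsto (fun k : ℕ => log (n * k + 1) / k) atTop (𝓝 0) := by
  have hlog : Tendsto (fun k : ℕ => log k / k) atTop (𝓝 0) := by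
    simpa [Function.comp_def] using (tendsto_pow_log_div_mul_add_atTop 1 0 1 one_ne_zero).comp
      tendsto_natCast_atTop_atTop
  have hupper : Tendsto (fun k : ℕ => log (n + 1) / k + log k / k) atTop (𝓝 0) := by
    simpa using (tendsto_const_div_atTop_nhds_zero_nat (log (n + 1))).add hlog
  refine tendsto_of_tendsto_of_tendsto_of_le_of_le' tendsto_const_nhds hupper ?_ ?_
  · exact Eventually.of_forall fun k =>
      div_nonneg (log_nonneg (le_add_of_nonneg_left (by positivity))) k.cast_nonneg
  · filter_upwards [eventually_ge_atTop 1] with k hk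
    have hk : (1 : ℝ) ≤ k := by exact_mod_cast hk
    rw [← add_div, ← log_mul (by positivity) (by positivity)]
    gcongr
    nlinarith

theorem tendsto_log_choose_mul_div {n m : ℕ} (h : m < n) :
    Tendsto (fun k : ℕ => log ((n * k).choose (m * k)) / k) atTop
      (𝓝 (log (chooseRate n m))) := by
  have hr := chooseRate_pos h.le
  have hlower : Tendsto (fun k : ℕ => log (chooseRate n m) - log (n * k + 1) / k) atTop
      (𝓝 (log (chooseRate n m))) := by
    simpa using (tendsto_log_mul_add_one_div n).const_sub (log (chooseRate n m))
  refine tendsto_of_tendsto_of_tendsto_of_le_of_le' hlower tendsto_const_nhds ?_ ?_ <;>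
    filter_upwards [eventually_ge_atTop 1] with k hk <;>
    have hk : (0 : ℝ) < k := by exact_mod_cast hk
  all_goals
    have hC : (0 : ℝ) < (n * k).choose (m * k) := by
      exact_mod_cast Nat.choose_pos (Nat.mul_le_mul_right k h.le)
  · have := log_le_log (by positivity) (chooseRate_pow_le_succ_mul_choose_mul h k)
    rw [log_pow, log_mul (by positivity) hC.ne'] at this
    rw [sub_le_iff_le_add, ← add_div, le_div_iff₀ hk]
    linarith
  · have := log_le_log hC (choose_mul_le_chooseRate_pow h.le k)
    rw [log_pow] at this
    rw [div_le_iff₀ hk]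
    linarith

theorem Nat.le_pow_card_primeFactors_s14 {c N : ℕ}
    (h : ∀ p ∈ c.primeFactors, p ^ c.factorization p ≤ N) : c ≤ N ^ #c.primeFactors := by
  rcases eq_or_ne c 0 with rfl | hc
  · exact Nat.zero_le _
  calc c = ∏ p ∈ c.primeFactors, p ^ c.factorization p :=
        (Nat.prod_factorization_pow_eq_self hc).symm
    _ ≤ ∏ _p ∈ c.primeFactors, N := prod_le_prod' h
    _ = N ^ #c.primeFactors := prod_const N

theorem log_choose_le_card_primeFactors_mul_log (N M : ℕ) :
    log (N.choose M) ≤ #(N.choose M).primeFactors * log N := by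
  rcases Nat.eq_zero_or_pos N with rfl | hN
  · cases M <;> simp
  rcases Nat.eq_zero_or_pos (N.choose M) with hC | hC
  · simp [hC]
  have := Nat.le_pow_card_primeFactors_s14 fun p _ =>
    Nat.pow_factorization_choose_le (p := p) (k := M) hN
  calc log (N.choose M) ≤ log ((N ^ #(N.choose M).primeFactors : ℕ) : ℝ) :=
        log_le_log (by exact_mod_cast hC) (by exact_mod_cast this)
    _ = _ := by rw [Nat.cast_pow, log_pow]

theorem card_primeFactors_le_add_log_div_log (c : ℕ) {y : ℝ} (hy : 1 < y) :
    (#c.primeFactors : ℝ) ≤ y + log c / log y := by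
  rcases eq_or_ne c 0 with rfl | hc
  · simp only [Nat.primeFactors_zero, card_empty, Nat.cast_zero, log_zero, zero_div, add_zero]
    linarith
  set large := c.primeFactors.filter fun p : ℕ => y < p
  have hsmall : #(c.primeFactors.filter fun p : ℕ => ¬y < p) ≤ ⌊y⌋₊ := by
    calc _ ≤ #(Icc 1 ⌊y⌋₊) := card_le_card fun p hp => ?_
      _ = ⌊y⌋₊ := by simp
    simp only [mem_filter, Nat.mem_primeFactors, not_lt] at hp
    exact mem_Icc.2 ⟨hp.1.1.one_le, Nat.le_floor hp.2⟩
  have hlarge : #large * log y ≤ log c := by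
    have hprod : y ^ #large ≤ c := calc
      y ^ #large = ∏ _p ∈ large, y := (prod_const y).symm
      _ ≤ ∏ p ∈ large, (p : ℝ) :=
        prod_le_prod (fun _ _ => by linarith) fun p hp => (mem_filter.1 hp).2.le
      _ ≤ c := by
        rw [← Nat.cast_prod]
        exact_mod_cast Nat.le_of_dvd (Nat.pos_of_ne_zero hc)
          ((prod_dvd_prod_of_subset _ _ _ (filter_subset _ _)).trans
            (Nat.prod_primeFactors_dvd c))
    simpa only [log_pow] using log_le_log (by positivity) hprod
  rw [← card_filter_add_card_filter_not (fun p : ℕ => y < p), Nat.cast_add, add_comm]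
  gcongr
  · exact (Nat.cast_le.2 hsmall).trans (Nat.floor_le (by linarith))
  · rwa [le_div_iff₀ (log_pos hy)]

theorem tendsto_div_add_of_tendsto_div {α : Type*} {l : Filter α} {f g : α → ℝ}
    (hg : Tendsto (fun x => g x / f x) l (𝓝 0)) (hf : ∀ᶠ x in l, f x ≠ 0) :
    Tendsto (fun x => f x / (f x + g x)) l (𝓝 1) := by
  have := (hg.const_add 1).inv₀ (by norm_num)
  rw [add_zero, inv_one] at this
  refine this.congr' ?_
  filter_upwards [hf] with x hx
  rw [one_add_div hx, inv_div]

theorem eventually_one_lt_div_log_sq : ∀ᶠ x : ℝ in atTop, 1 < x / log x ^ 2 := by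
  filter_upwards [(tendsto_pow_log_div_mul_add_atTop 1 0 2 one_ne_zero).eventually
    (gt_mem_nhds one_pos), eventually_gt_atTop 1] with x hx hx1
  have := log_pos hx1
  rw [one_mul, add_zero, div_lt_one (by linarith)] at hx
  rwa [one_lt_div (by positivity)]

theorem log_choose_mul_div_mul_le_card_primeFactors_div {n : ℕ} (hn : 0 < n) (m : ℕ) {k : ℕ}
    (hk : 1 < k) :
    log ((n * k).choose (m * k)) / k * (log k / (log k + log n)) ≤
      #((n * k).choose (m * k)).primeFactors / (k / log k) := by
  have hk : (1 : ℝ) < k := by exact_mod_cast hk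
  have hlogk := log_pos hk
  have hlogn : 0 ≤ log n := log_natCast_nonneg n
  have h := log_choose_le_card_primeFactors_mul_log (n * k) (m * k)
  rw [Nat.cast_mul, log_mul (by positivity) (by positivity)] at h
  calc _ = log ((n * k).choose (m * k)) / (log k + log n) * (log k / k) := by ring
    _ ≤ #((n * k).choose (m * k)).primeFactors * (log k / k) := by
      gcongr
      rw [div_le_iff₀ (by positivity)]
      linarith
    _ = _ := by rw [div_div_eq_mul_div, mul_div_assoc]

theorem card_primeFactors_div_le (c : ℕ) {x : ℝ} (hx : 1 < x) (hy : 1 < x / log x ^ 2) :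
    #c.primeFactors / (x / log x) ≤
      (log x)⁻¹ + log c / x * (log x / (log x + -2 * log (log x))) := by
  have hlogx := log_pos hx
  have hlogy : log (x / log x ^ 2) = log x + -2 * log (log x) := by
    rw [log_div (by positivity) (by positivity), log_pow]
    push_cast
    ring
  calc #c.primeFactors / (x / log x) = #c.primeFactors * (log x / x) := by
        rw [div_div_eq_mul_div, mul_div_assoc]
    _ ≤ (x / log x ^ 2 + log c / log (x / log x ^ 2)) * (log x / x) := by
      gcongr
      exact card_primeFactors_le_add_log_div_log c hy
    _ = _ := by
      rw [hlogy]
      field_simp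

theorem tendsto_card_primeFactors_choose_mul_div {n m : ℕ} (h : m < n) :
    Tendsto (fun k : ℕ => #((n * k).choose (m * k)).primeFactors / (k / log k)) atTop
      (𝓝 (log (chooseRate n m))) := by
  have hL := tendsto_log_choose_mul_div h
  have hlog : Tendsto (fun k : ℕ => log k) atTop atTop :=
    tendsto_log_atTop.comp tendsto_natCast_atTop_atTop
  have hlower : Tendsto (fun k : ℕ => log ((n * k).choose (m * k)) / k *
      (log k / (log k + log n))) atTop (𝓝 (log (chooseRate n m))) := by
    simpa using hL.mul (tendsto_div_add_of_tendsto_div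
      (tendsto_const_nhds.div_atTop hlog) (hlog.eventually_ne_atTop 0))
  have hupper : Tendsto (fun k : ℕ => (log k)⁻¹ + log ((n * k).choose (m * k)) / k *
      (log k / (log k + -2 * log (log k)))) atTop (𝓝 (log (chooseRate n m))) := by
    have hloglog : Tendsto (fun k : ℕ => -2 * log (log k) / log k) atTop (𝓝 0) := by
      simpa [mul_div_assoc, neg_div] using
        ((tendsto_pow_log_div_mul_add_atTop 1 0 1 one_ne_zero).comp hlog).const_mul (-2)
    simpa using (hlog.inv_tendsto_atTop).add
      (hL.mul (tendsto_div_add_of_tendsto_div hloglog (hlog.eventually_ne_atTop 0)))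
  refine tendsto_of_tendsto_of_tendsto_of_le_of_le' hlower hupper ?_ ?_
  · filter_upwards [eventually_gt_atTop 1] with k hk
    exact log_choose_mul_div_mul_le_card_primeFactors_div (by omega) m hk
  · filter_upwards [eventually_gt_atTop 1,
      tendsto_natCast_atTop_atTop.eventually eventually_one_lt_div_log_sq] with k hk hy
    exact card_primeFactors_div_le _ (by exact_mod_cast hk) hy

theorem stmt_14_general (n m : ℕ) (hnm : m < n) :
    (fun k : ℕ =>
        (((n * k).choose (m * k)).primeFactors.card : ℝ) -
          Real.log ((n : ℝ) ^ n / ((m : ℝ) ^ m * ((n : ℝ) - m) ^ (n - m))) *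
            ((k : ℝ) / Real.log k))
      =o[Filter.atTop] (fun k : ℕ => (k : ℝ) / Real.log k) := by
  have hω := tendsto_card_primeFactors_choose_mul_div hnm
  have hg : ∀ᶠ k : ℕ in atTop, (k : ℝ) / log k ≠ 0 := by
    filter_upwards [eventually_gt_atTop 1] with k hk
    have hk : (1 : ℝ) < k := by exact_mod_cast hk
    exact (div_pos (by linarith) (log_pos hk)).ne'
  rw [isLittleO_iff_tendsto' (hg.mono fun k hk h => absurd h hk)]
  refine (sub_self (log (chooseRate n m)) ▸ hω.sub_const (log (chooseRate n m))).congr' ?_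
  filter_upwards [hg] with k hk
  rw [sub_div, mul_div_cancel_right₀ _ hk, chooseRate]

theorem stmt_14 (n m : ℕ) (hm : 1 ≤ m) (hnm : m < n) :
    (fun k : ℕ =>
        (((n * k).choose (m * k)).primeFactors.card : ℝ) -
          Real.log ((n : ℝ) ^ n / ((m : ℝ) ^ m * ((n : ℝ) - m) ^ (n - m))) *
            ((k : ℝ) / Real.log k))
      =o[Filter.atTop] (fun k : ℕ => (k : ℝ) / Real.log k) :=
  stmt_14_general n m hnm
end

section
/- For every integer n ≥ 2, log(n^n/(n−1)^{n−1}) = Σ_{j=0}^{∞} Σ_{i=1}^{n−1} ( 1/(j + i/n) − 1/(j + i/(n−1)) ), where for j = 0 and the term with i/(n−1) = 1 the convention is that only well-defined (finite) terms appear; equivalently the double series converges to n log n − (n−1) log(n−1). -/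
/-!
With `m = n - 1`, the inner sum for the step `1/n` is a block of `n (H_{n(j+1)} - H_{nj})` minus
the term `1/(j+1)`, and the one for the step `1/m` is the block `m (H_{m(j+1)} - H_{mj})`. So the
double series telescopes: its `J`-th partial sum is `n H_{nJ} - H_J - m H_{mJ}`. Since
`H_k = log k + γ + o(1)` and the weights satisfy `n - 1 - m = 0`, the `log J` and `γ` contributions
cancel in the limit, leaving `n log n - m log m`. The terms are nonnegative, so convergence of the
partial sums gives `HasSum`.
-/

open Real Filter Topology Finset

lemma sum_Icc_one_div_nat_add (a k : ℕ) :
    ∑ i ∈ Icc 1 k, (1 : ℝ) / (a + i) = harmonic (a + k) - harmonic a := by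
  induction k with
  | zero => simp
  | succ k ih =>
    rw [sum_Icc_succ_top (by omega), ih, ← add_assoc, harmonic_succ]
    push_cast
    ring

lemma sum_Icc_one_div_add_div_self (d j : ℕ) :
    ∑ i ∈ Icc 1 d, (1 : ℝ) / (j + i / d) = d * (harmonic (d * (j + 1)) - harmonic (d * j)) := by
  obtain rfl | hd := eq_or_ne d 0
  · simp
  have hd' : (d : ℝ) ≠ 0 := by exact_mod_cast hd
  have hterm : ∀ i : ℕ, (1 : ℝ) / (j + i / d) = d * (1 / ((d * j : ℕ) + i)) := by
    intro i
    push_cast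
    field_simp
  simp_rw [hterm, ← mul_sum, sum_Icc_one_div_nat_add, mul_add, mul_one]

/-- The `J`-th partial sum of the series for `n = m + 1`. -/
noncomputable def weightedHarmonic (m J : ℕ) : ℝ :=
  (m + 1) * harmonic ((m + 1) * J) - harmonic J - m * harmonic (m * J)

lemma sum_Icc_one_div_sub_eq_weightedHarmonic_sub (m j : ℕ) :
    ∑ i ∈ Icc 1 m, ((1 : ℝ) / (j + i / (m + 1)) - 1 / (j + i / m)) =
      weightedHarmonic m (j + 1) - weightedHarmonic m j := by
  have hlast : ∑ i ∈ Icc 1 (m + 1), (1 : ℝ) / (j + i / (m + 1)) =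
      ∑ i ∈ Icc 1 m, (1 : ℝ) / (j + i / (m + 1)) + 1 / (j + 1) := by
    rw [sum_Icc_succ_top (by omega)]
    push_cast
    rw [div_self (by positivity)]
  have hstep := sum_Icc_one_div_add_div_self (m + 1) j
  push_cast at hstep
  rw [sum_sub_distrib, sum_Icc_one_div_add_div_self m j, eq_sub_of_add_eq hlast.symm, hstep]
  simp only [weightedHarmonic, harmonic_succ]
  push_cast
  ring

lemma weightedHarmonic_zero (m : ℕ) : weightedHarmonic m 0 = 0 := by
  simp [weightedHarmonic]

lemma tendsto_mul_harmonic_mul_sub_log (d : ℕ) :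
    Tendsto (fun J : ℕ => (d : ℝ) * (harmonic (d * J) - log J)) atTop
      (𝓝 (d * (log d + eulerMascheroniConstant))) := by
  obtain rfl | hd := eq_or_ne d 0
  · simp
  refine Tendsto.const_mul _ ?_
  have hmul : Tendsto (fun J : ℕ => d * J) atTop atTop :=
    tendsto_id.const_mul_atTop' (Nat.pos_of_ne_zero hd)
  have hlim := (tendsto_harmonic_sub_log.comp hmul).const_add (log d)
  refine hlim.congr' ?_
  filter_upwards [eventually_ne_atTop 0] with J hJ
  simp only [Function.comp_apply, Nat.cast_mul]
  rw [log_mul (by exact_mod_cast hd) (by exact_mod_cast hJ)]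
  ring

lemma tendsto_weightedHarmonic (m : ℕ) :
    Tendsto (weightedHarmonic m) atTop (𝓝 ((m + 1) * log (m + 1) - m * log m)) := by
  have hlim := ((tendsto_mul_harmonic_mul_sub_log (m + 1)).sub
    (tendsto_mul_harmonic_mul_sub_log 1)).sub (tendsto_mul_harmonic_mul_sub_log m)
  push_cast at hlim
  convert hlim using 1
  · funext J
    simp only [weightedHarmonic, one_mul]
    ring
  · rw [log_one]
    congr 1
    ring

lemma one_div_add_div_succ_sub_nonneg {m i : ℕ} (hm : m ≠ 0) (hi : i ≠ 0) (j : ℕ) :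
    0 ≤ (1 : ℝ) / (j + i / (m + 1)) - 1 / (j + i / m) := by
  have hi' : (0 : ℝ) < i := by exact_mod_cast Nat.pos_of_ne_zero hi
  have hm' : (0 : ℝ) < m := by exact_mod_cast Nat.pos_of_ne_zero hm
  rw [sub_nonneg]
  gcongr
  linarith

lemma hasSum_sum_Icc_one_div_sub (m : ℕ) :
    HasSum (fun j : ℕ => ∑ i ∈ Icc 1 m, ((1 : ℝ) / (j + i / (m + 1)) - 1 / (j + i / m)))
      ((m + 1) * log (m + 1) - m * log m) := by
  have hnonneg (j : ℕ) : 0 ≤ ∑ i ∈ Icc 1 m, ((1 : ℝ) / (j + i / (m + 1)) - 1 / (j + i / m)) :=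
    sum_nonneg fun i hi => by
      obtain ⟨hi1, him⟩ := mem_Icc.mp hi
      exact one_div_add_div_succ_sub_nonneg (by omega) (by omega) j
  rw [hasSum_iff_tendsto_nat_of_nonneg hnonneg]
  convert tendsto_weightedHarmonic m using 2 with J
  simp_rw [sum_Icc_one_div_sub_eq_weightedHarmonic_sub, sum_range_sub, weightedHarmonic_zero,
    sub_zero]

theorem stmt_18_general (n : ℕ) :
    HasSum
      (fun j : ℕ =>
        ∑ i ∈ Finset.Icc 1 (n - 1),
          ((1 : ℝ) / ((j : ℝ) + (i : ℝ) / n) - 1 / ((j : ℝ) + (i : ℝ) / ((n : ℝ) - 1))))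
      ((n : ℝ) * Real.log n - ((n : ℝ) - 1) * Real.log ((n : ℝ) - 1)) := by
  obtain _ | m := n
  · simp
  simpa using hasSum_sum_Icc_one_div_sub m

theorem stmt_18 (n : ℕ) (hn : 2 ≤ n) :
    HasSum
      (fun j : ℕ =>
        ∑ i ∈ Finset.Icc 1 (n - 1),
          ((1 : ℝ) / ((j : ℝ) + (i : ℝ) / n) - 1 / ((j : ℝ) + (i : ℝ) / ((n : ℝ) - 1))))
      ((n : ℝ) * Real.log n - ((n : ℝ) - 1) * Real.log ((n : ℝ) - 1)) :=
  stmt_18_general n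
end

section
/- Suppose k = k(t) and n = n(t) are sequences of positive integers with k ≤ n, k → ∞, and k = o(n) as t → ∞. Then ω(C(n,k)) = o(n/log n) as t → ∞. -/
/-!
Split the prime factors of `N = C(n,k)` at `√n`: there are at most `√n` small ones, and the
large ones are each `> √n`, so their number is at most `2 log N / log n`. The first term is
`o(n / log n)`, and `log C(n,k) ≤ k (log (n/k) + 1) = n (r log (1/r) + r)` with `r = k/n → 0`,
which is `o(n)` because `r log r → 0`.
-/

open Filter Asymptotics Real Topology

theorem Nat.card_primeFactors_le_add_log_div_log (N : ℕ) {m : ℕ} (hm : 1 ≤ m) :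
    (N.primeFactors.card : ℝ) ≤ m + Real.log N / Real.log (m + 1) := by
  rcases eq_or_ne N 0 with rfl | hN
  · simp
  set small := N.primeFactors.filter (· ≤ m)
  set large := N.primeFactors.filter (¬ · ≤ m)
  have h_small : small.card ≤ m := by
    calc small.card ≤ (Finset.Icc 1 m).card := Finset.card_le_card fun p hp => by
          simp only [small, Finset.mem_filter] at hp
          exact Finset.mem_Icc.2 ⟨Nat.pos_of_mem_primeFactors hp.1, hp.2⟩
      _ = m := by simp
  have h_large : (m + 1) ^ large.card ≤ N :=
    calc (m + 1) ^ large.card ≤ ∏ p ∈ large, p := Finset.pow_card_le_prod _ _ _ fun p hp => by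
          simp only [large, Finset.mem_filter] at hp
          omega
      _ ≤ N := Nat.le_of_dvd (Nat.pos_of_ne_zero hN)
          ((Finset.prod_dvd_prod_of_subset _ _ id (Finset.filter_subset _ _)).trans
            (Nat.prod_primeFactors_dvd N))
  have h_log_pos : 0 < Real.log (m + 1) := Real.log_pos (by norm_cast; omega)
  have h_large_log : (large.card : ℝ) * Real.log (m + 1) ≤ Real.log N := by
    rw [← Real.log_pow]
    exact Real.log_le_log (by positivity) (by exact_mod_cast h_large)
  rw [← Finset.card_filter_add_card_filter_not (· ≤ m), Nat.cast_add]
  exact _root_.add_le_add (Nat.cast_le.2 h_small) ((le_div_iff₀ h_log_pos).2 h_large_log)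

theorem Nat.card_primeFactors_le_sqrt_add_log_div_log (N : ℕ) {n : ℕ} (hn : 2 ≤ n) :
    (N.primeFactors.card : ℝ) ≤ √n + 2 * Real.log N / Real.log n := by
  have hm : 1 ≤ n.sqrt := Nat.le_sqrt.2 (by omega)
  have h_log_n : Real.log n ≤ 2 * Real.log (n.sqrt + 1) :=
    calc Real.log n ≤ Real.log ((n.sqrt + 1) ^ 2) :=
          Real.log_le_log (by positivity) (by exact_mod_cast (Nat.lt_succ_sqrt' n).le)
      _ = 2 * Real.log (n.sqrt + 1) := by rw [Real.log_pow]; norm_num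
  calc (N.primeFactors.card : ℝ) ≤ n.sqrt + Real.log N / Real.log (n.sqrt + 1) :=
        N.card_primeFactors_le_add_log_div_log hm
    _ = n.sqrt + 2 * Real.log N / (2 * Real.log (n.sqrt + 1)) := by
        rw [mul_div_mul_left _ _ two_ne_zero]
    _ ≤ √n + 2 * Real.log N / Real.log n := by
        gcongr
        · exact nat_sqrt_le_real_sqrt
        · exact Real.log_pos (by exact_mod_cast hn)

theorem Nat.log_choose_le {n k : ℕ} (h : k ≤ n) :
    Real.log (n.choose k) ≤ k * (Real.log (n / k) + 1) := by
  rcases k.eq_zero_or_pos with rfl | hk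
  · simp
  have hk' : (0 : ℝ) < k := by exact_mod_cast hk
  have hn' : (0 : ℝ) < n := by exact_mod_cast hk.trans_le h
  have h_choose : (n.choose k : ℝ) ≤ (n / k) ^ k * exp k :=
    calc (n.choose k : ℝ) ≤ n ^ k / k.factorial := Nat.choose_le_pow_div k n
      _ = (n / k) ^ k * (k ^ k / k.factorial) := by rw [div_pow]; field_simp
      _ ≤ (n / k) ^ k * exp k := by gcongr; exact Real.pow_div_factorial_le_exp _ hk'.le k
  calc Real.log (n.choose k) ≤ Real.log ((n / k) ^ k * exp k) :=
        Real.log_le_log (by exact_mod_cast Nat.choose_pos h) h_choose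
    _ = k * (Real.log (n / k) + 1) := by
        rw [Real.log_mul (by positivity) (exp_ne_zero _), Real.log_pow, Real.log_exp]; ring

theorem Asymptotics.IsLittleO.mul_log_div_add_one {α : Type*} {l : Filter α} {k n : α → ℝ}
    (h : k =o[l] n) : (fun t => k t * (log (n t / k t) + 1)) =o[l] n := by
  have h_ratio := h.tendsto_div_nhds_zero
  have h_lim : Tendsto (fun t => negMulLog (k t / n t) + k t / n t) l (𝓝 0) := by
    simpa using ((continuous_negMulLog.tendsto 0).comp h_ratio).add h_ratio
  have h_scaled : (fun t => n t * (negMulLog (k t / n t) + k t / n t)) =o[l] n := by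
    simpa using (isBigO_refl n l).mul_isLittleO (isLittleO_one_iff ℝ |>.2 h_lim)
  refine h_scaled.congr' ?_ EventuallyEq.rfl
  filter_upwards [h.bound one_pos] with t ht
  rcases eq_or_ne (n t) 0 with hn | hn
  · -- there the bound `‖k t‖ ≤ ‖n t‖` forces `k t = 0`
    simp_all
  · rw [negMulLog, ← inv_div, log_inv]
    field_simp

theorem isLittleO_log_choose {α : Type*} {l : Filter α} {k n : α → ℕ} (hkn : ∀ t, k t ≤ n t)
    (hko : (fun t => (k t : ℝ)) =o[l] fun t => (n t : ℝ)) :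
    (fun t => log ((n t).choose (k t))) =o[l] fun t => (n t : ℝ) := by
  refine IsBigO.trans_isLittleO (IsBigO.of_bound' (Eventually.of_forall fun t => ?_))
    hko.mul_log_div_add_one
  have h_nonneg : 0 ≤ log ((n t).choose (k t)) :=
    log_nonneg (by exact_mod_cast Nat.choose_pos (hkn t))
  rw [norm_of_nonneg h_nonneg]
  exact (Nat.log_choose_le (hkn t)).trans (le_abs_self _)

theorem Asymptotics.IsLittleO.div_right {α : Type*} {l : Filter α} {f g : α → ℝ}
    (h : f =o[l] g) (d : α → ℝ) : (fun x => f x / d x) =o[l] fun x => g x / d x := by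
  simpa only [div_eq_mul_inv] using h.mul_isBigO (isBigO_refl (fun x => (d x)⁻¹) l)

theorem isLittleO_sqrt_div_log : (fun x : ℝ => √x) =o[atTop] fun x => x / log x := by
  have h_mul : (fun x : ℝ => √x * log x) =o[atTop] fun x => x := by
    have h_log : log =o[atTop] fun x : ℝ => √x := by
      simpa only [sqrt_eq_rpow] using isLittleO_log_rpow_atTop one_half_pos
    refine ((isBigO_refl (fun x : ℝ => √x) atTop).mul_isLittleO h_log).congr'
      EventuallyEq.rfl ?_
    filter_upwards [eventually_ge_atTop 0] with x hx
    exact mul_self_sqrt hx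
  refine (h_mul.div_right log).congr' ?_ EventuallyEq.rfl
  filter_upwards [eventually_gt_atTop 1] with x hx
  exact mul_div_cancel_right₀ _ (log_pos hx).ne'

open Filter Asymptotics in
theorem stmt_19_general (k n : ℕ → ℕ) (hkn : ∀ t, k t ≤ n t)
    (hk : Tendsto k atTop atTop)
    (hko : (fun t => (k t : ℝ)) =o[atTop] (fun t => (n t : ℝ))) :
    (fun t => (((n t).choose (k t)).primeFactors.card : ℝ))
      =o[atTop] (fun t => (n t : ℝ) / Real.log (n t)) := by
  have hn : Tendsto n atTop atTop := tendsto_atTop_mono hkn hk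
  have h_sqrt := isLittleO_sqrt_div_log.comp_tendsto (tendsto_natCast_atTop_atTop.comp hn)
  have h_log :=
    ((isLittleO_log_choose hkn hko).const_mul_left 2).div_right fun t => Real.log (n t)
  refine IsBigO.trans_isLittleO (IsBigO.of_bound' ?_) (h_sqrt.add h_log)
  filter_upwards [hn.eventually_ge_atTop 2] with t ht
  rw [Real.norm_natCast]
  exact (Nat.card_primeFactors_le_sqrt_add_log_div_log _ ht).trans (Real.le_norm_self _)

open Filter Asymptotics in
theorem stmt_19 (k n : ℕ → ℕ) (hpos : ∀ t, 1 ≤ k t) (hkn : ∀ t, k t ≤ n t)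
    (hk : Tendsto k atTop atTop)
    (hko : (fun t => (k t : ℝ)) =o[atTop] (fun t => (n t : ℝ))) :
    (fun t => (((n t).choose (k t)).primeFactors.card : ℝ))
      =o[atTop] (fun t => (n t : ℝ) / Real.log (n t)) :=
  stmt_19_general k n hkn hk hko
end
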